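/- Let d ≥ 2 be an integer, ε ∈ ℂ a primitive d-th root of unity, u ∈ ℂ∖{0}, v ∈ ℂ, and set l(x) = ux + v. Let h₂, P ∈ ℂ[x] satisfy h₂∘l = P∘T_d. Then h₂ collapses the conic C_{ε,u,v} to the diagonal: for every (x,y) ∈ C_{ε,u,v} one has h₂(x) = h₂(y). -/

import Mathlib

/- After the affine change of variables `x = l(a)`, `y = l(b)`, the conic `C_{ε,u,v}` becomes
`b² - (ε + ε⁻¹) a b + a² + (ε - ε⁻¹)² = 0`, which is the image of `z ↦ (z + z⁻¹, ε z + (ε z)⁻¹)`.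
Since `ε ^ d = 1`, the Chebyshev relation gives `T_d (z + z⁻¹) = z ^ d + z⁻¹ ^ d = T_d (ε z + (ε z)⁻¹)`,
so `h₂ ∘ l = P ∘ T_d` takes the same value at `a` and `b`. -/

open Polynomial

/-- The conic `C_{ε,u,v}`. -/
def conicSet (ε u v : ℂ) : Set (ℂ × ℂ) :=
  {p | p.2 ^ 2 + (ε + ε⁻¹ - 2) * v * (p.1 + p.2) - (ε + ε⁻¹) * p.1 * p.2
    + p.1 ^ 2 + (2 - ε - ε⁻¹) * v ^ 2 + (ε - ε⁻¹) ^ 2 * u ^ 2 = 0}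

section Joukowski

variable {K : Type*} [Field K]

theorem exists_ne_zero_add_inv_eq [IsAlgClosed K] (a : K) : ∃ z : K, z ≠ 0 ∧ z + z⁻¹ = a := by
  have hdeg : (C 1 * X ^ 2 + C (-a) * X + C 1 : K[X]).degree ≠ 0 := by
    rw [degree_quadratic one_ne_zero]; decide
  obtain ⟨z, hz⟩ := IsAlgClosed.exists_root _ hdeg
  simp only [IsRoot, eval_add, eval_mul, eval_pow, eval_X, eval_C] at hz
  have hz0 : z ≠ 0 := by rintro rfl; simp at hz
  refine ⟨z, hz0, ?_⟩
  field_simp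
  linear_combination hz

theorem exists_joukowski_param_of_sq_eq_one [IsAlgClosed K] {ε a b : K} (hε : ε ^ 2 = 1)
    (h : b ^ 2 - (ε + ε⁻¹) * a * b + a ^ 2 + (ε - ε⁻¹) ^ 2 = 0) :
    ∃ z : K, z ≠ 0 ∧ a = z + z⁻¹ ∧ b = ε * z + (ε * z)⁻¹ := by
  have hεinv : ε⁻¹ = ε := inv_eq_of_mul_eq_one_right (by rw [← sq, hε])
  have hb : b = ε * a := by
    rw [hεinv, sub_self] at h
    exact sub_eq_zero.mp (pow_eq_zero_iff two_ne_zero |>.mp (by linear_combination h + a ^ 2 * hε))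
  obtain ⟨z, hz0, rfl⟩ := exists_ne_zero_add_inv_eq a
  exact ⟨z, hz0, rfl, by rw [hb, mul_inv, hεinv]; ring⟩

theorem exists_joukowski_param_of_sub_inv_ne_zero {ε a b : K} (hε : ε - ε⁻¹ ≠ 0)
    (h : b ^ 2 - (ε + ε⁻¹) * a * b + a ^ 2 + (ε - ε⁻¹) ^ 2 = 0) :
    ∃ z : K, z ≠ 0 ∧ a = z + z⁻¹ ∧ b = ε * z + (ε * z)⁻¹ := by
  have hε0 : ε ≠ 0 := by rintro rfl; simp at hε
  have hε' : ε⁻¹ - ε ≠ 0 := by rw [← neg_sub]; exact neg_ne_zero.mpr hε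
  -- `z` and `z⁻¹` are the solutions of the linear system `a = z + w`, `b = ε z + ε⁻¹ w`.
  have hzw : (b - ε⁻¹ * a) / (ε - ε⁻¹) * ((b - ε * a) / (ε⁻¹ - ε)) = 1 := by
    rw [div_mul_div_comm, div_eq_one_iff_eq (mul_ne_zero hε hε')]
    linear_combination h + a ^ 2 * mul_inv_cancel₀ hε0
  refine ⟨_, left_ne_zero_of_mul_eq_one hzw, ?_, ?_⟩
  · rw [inv_eq_of_mul_eq_one_right hzw, div_add_div _ _ hε hε', eq_div_iff (mul_ne_zero hε hε')]
    ring
  · rw [mul_inv, inv_eq_of_mul_eq_one_right hzw, ← mul_div_assoc, ← mul_div_assoc,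
      div_add_div _ _ hε hε', eq_div_iff (mul_ne_zero hε hε')]
    ring

theorem exists_joukowski_param [IsAlgClosed K] {ε a b : K} (hε0 : ε ≠ 0)
    (h : b ^ 2 - (ε + ε⁻¹) * a * b + a ^ 2 + (ε - ε⁻¹) ^ 2 = 0) :
    ∃ z : K, z ≠ 0 ∧ a = z + z⁻¹ ∧ b = ε * z + (ε * z)⁻¹ := by
  by_cases hε : ε - ε⁻¹ = 0
  · refine exists_joukowski_param_of_sq_eq_one ?_ h
    have := sub_eq_zero.mp hε
    field_simp at this
    linear_combination this
  · exact exists_joukowski_param_of_sub_inv_ne_zero hε h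

theorem eval_mul_add_inv_eq_of_pow_eq_one {T : K[X]} {d : ℕ}
    (hT : ∀ z : K, z ≠ 0 → T.eval (z + z⁻¹) = z ^ d + z⁻¹ ^ d) {ε z : K} (hε : ε ^ d = 1)
    (hε0 : ε ≠ 0) (hz : z ≠ 0) :
    T.eval (ε * z + (ε * z)⁻¹) = T.eval (z + z⁻¹) := by
  rw [hT _ (mul_ne_zero hε0 hz), hT _ hz, inv_pow, inv_pow, mul_pow, hε, one_mul]

end Joukowski

theorem mk_mem_conicSet_iff {ε u : ℂ} (hu : u ≠ 0) (v a b : ℂ) :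
    (u * a + v, u * b + v) ∈ conicSet ε u v ↔
      b ^ 2 - (ε + ε⁻¹) * a * b + a ^ 2 + (ε - ε⁻¹) ^ 2 = 0 := by
  refine Iff.trans ?_ (mul_eq_zero_iff_left (pow_ne_zero 2 hu))
  simp only [conicSet, Set.mem_ofPred_eq]
  ring_nf

theorem stmt17
    (T : ℕ → Polynomial ℂ)
    (hT : ∀ (r : ℕ) (z : ℂ), z ≠ 0 → (T r).eval (z + z⁻¹) = z ^ r + z⁻¹ ^ r)
    (d : ℕ) (hd : 2 ≤ d) (ε : ℂ) (hε : IsPrimitiveRoot ε d)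
    (u : ℂ) (hu : u ≠ 0) (v : ℂ)
    (h₂ P : Polynomial ℂ)
    (hP : h₂.comp (C u * X + C v) = P.comp (T d)) :
    ∀ p ∈ conicSet ε u v, h₂.eval p.1 = h₂.eval p.2 := by
  have hε0 : ε ≠ 0 := hε.ne_zero (by omega)
  have hl (t : ℂ) : h₂.eval (u * t + v) = P.eval ((T d).eval t) := by
    simpa using congrArg (eval t) hP
  have hl_surj (x : ℂ) : ∃ a, u * a + v = x := ⟨(x - v) / u, by field_simp; ring⟩
  rintro ⟨x, y⟩ hp
  obtain ⟨a, rfl⟩ := hl_surj x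
  obtain ⟨b, rfl⟩ := hl_surj y
  obtain ⟨z, hz, rfl, rfl⟩ := exists_joukowski_param hε0 ((mk_mem_conicSet_iff hu v a b).mp hp)
  simp only [hl, eval_mul_add_inv_eq_of_pow_eq_one (hT d) hε.pow_eq_one hε0 hz]
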